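/- arXiv:2403.01354 — 3 statements merged into one kernel-verified Lean document; each statement's English description precedes it below -/
import Mathlib

section
/- Let P be a subset of the plane ℝ², let R ⊆ P be a nonempty set, and define the strong visibility region SV(R) = { q ∈ P : for every r ∈ R, the segment [r, q] is contained in P }. Suppose there are convex sets C₁, …, C_k ⊆ ℝ², each contained in P, with P \ SV(R) ⊆ C₁ ∪ … ∪ C_k. Then every finite hidden set H in P that contains a point of R satisfies |H| ≤ k + 1. -/
/-- Two points `p q` see each other in `P` if the closed segment between them
lies in `P`. A hidden set in `P` is a subset of `P` no two distinct points of
which see each other. -/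
def IsHiddenSet (P H : Set (ℝ × ℝ)) : Prop :=
  H ⊆ P ∧ ∀ p ∈ H, ∀ q ∈ H, p ≠ q → ¬ segment ℝ p q ⊆ P

/-- The strong visibility region of `R` in `P`: the points of `P` seen by
every point of `R`. -/
def strongVisibilityRegion (P R : Set (ℝ × ℝ)) : Set (ℝ × ℝ) :=
  {q ∈ P | ∀ r ∈ R, segment ℝ r q ⊆ P}


/-! Every point of `H` other than a point `r ∈ H ∩ R` is hidden from `r`, hence lies outside
`SV(R)` and so in some `Cᵢ`. A convex subset of `P` contains at most one point of a hidden set,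
since any two of its points see each other through it. So the `k` pieces hold at most `k`
points of `H`, and `r` is the last one. -/

open Set

theorem Set.ncard_le_card_of_subset_iUnion {ι α : Type*} [Fintype ι] {S : Set α}
    {C : ι → Set α} (hS : S ⊆ ⋃ i, C i) (hC : ∀ i, (S ∩ C i).Subsingleton) :
    S.ncard ≤ Fintype.card ι := by
  have hS_eq : S = ⋃ i, S ∩ C i := by rw [← inter_iUnion, inter_eq_left.2 hS]
  calc S.ncard = (⋃ i, S ∩ C i).ncard := congrArg ncard hS_eq
    _ ≤ ∑ i, (S ∩ C i).ncard := ncard_iUnion_le_of_fintype _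
    _ ≤ ∑ _i : ι, 1 :=
      Finset.sum_le_sum fun i _ ↦ (ncard_le_one (hC i).finite).2 fun _ ha _ hb ↦ hC i ha hb
    _ = Fintype.card ι := by simp

namespace IsHiddenSet

variable {P H : Set (ℝ × ℝ)}

theorem inter_subsingleton_of_convex (hH : IsHiddenSet P H) {C : Set (ℝ × ℝ)}
    (hC : Convex ℝ C) (hCP : C ⊆ P) : (H ∩ C).Subsingleton := by
  intro p hp q hq
  by_contra hpq
  exact hH.2 p hp.1 q hq.1 hpq ((hC.segment_subset hp.2 hq.2).trans hCP)

theorem sdiff_singleton_subset_sdiff_strongVisibilityRegion (hH : IsHiddenSet P H)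
    {R : Set (ℝ × ℝ)} {r : ℝ × ℝ} (hrH : r ∈ H) (hrR : r ∈ R) :
    H \ {r} ⊆ P \ strongVisibilityRegion P R := by
  rintro p ⟨hpH, hpr⟩
  refine ⟨hH.1 hpH, fun hp ↦ hH.2 p hpH r hrH hpr ?_⟩
  rw [segment_symm]
  exact hp.2 r hrR

end IsHiddenSet

theorem hiddenSet_card_le_of_strongVisibility_cover_general
    (P R : Set (ℝ × ℝ))
    (k : ℕ) (C : Fin k → Set (ℝ × ℝ))
    (hconv : ∀ i, Convex ℝ (C i)) (hsub : ∀ i, C i ⊆ P)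
    (hcover : P \ strongVisibilityRegion P R ⊆ ⋃ i, C i)
    (H : Set (ℝ × ℝ)) (hH : IsHiddenSet P H)
    (hmeet : (H ∩ R).Nonempty) :
    H.ncard ≤ k + 1 := by
  obtain ⟨r, hrH, hrR⟩ := hmeet
  have hcard_rest : (H \ {r}).ncard ≤ k := by
    simpa using Set.ncard_le_card_of_subset_iUnion
      ((hH.sdiff_singleton_subset_sdiff_strongVisibilityRegion hrH hrR).trans hcover)
      fun i ↦ (hH.inter_subsingleton_of_convex (hconv i) (hsub i)).anti (inter_subset_inter_left _ sdiff_subset)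
  calc H.ncard ≤ (H \ {r}).ncard + ({r} : Set (ℝ × ℝ)).ncard :=
        ncard_le_ncard_sdiff_add_ncard H {r} (finite_singleton r)
    _ ≤ k + 1 := by rw [ncard_singleton]; omega

/-- If `P \ SV(R)` is covered by `k` convex pieces contained in `P`, then any
finite hidden set in `P` containing a point of `R` has at most `k + 1` points. -/
theorem hiddenSet_card_le_of_strongVisibility_cover
    (P R : Set (ℝ × ℝ)) (hR : R.Nonempty) (hRP : R ⊆ P)
    (k : ℕ) (C : Fin k → Set (ℝ × ℝ))
    (hconv : ∀ i, Convex ℝ (C i)) (hsub : ∀ i, C i ⊆ P)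
    (hcover : P \ strongVisibilityRegion P R ⊆ ⋃ i, C i)
    (H : Set (ℝ × ℝ)) (hH : IsHiddenSet P H) (hfin : H.Finite)
    (hmeet : (H ∩ R).Nonempty) :
    H.ncard ≤ k + 1 :=
  hiddenSet_card_le_of_strongVisibility_cover_general P R k C hconv hsub hcover H hH hmeet
end

section
/- There exists a compact set P ⊆ ℝ² and a point x ∈ P such that P is star-shaped with respect to x (for every p ∈ P the segment [x, p] is contained in P), and such that: (i) every finite hidden set in P has at most 2 points; (ii) there exist 3 convex sets, each contained in P, whose union is P; and (iii) there do not exist 2 convex sets, each contained in P, whose union is P. Hence this star-shaped polygon satisfies hs(P) = 2 < 3 = cc(P), i.e., it is not a homestead polygon. -/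
namespace Pentagram

/-- Closed halfplane `c·x + d·y ≤ 1`. -/
def Lh (c d : ℝ) : Set (ℝ × ℝ) := {z | c * z.1 + d * z.2 ≤ 1}

/-- Closed halfplane `1 ≤ c·x + d·y`. -/
def Gh (c d : ℝ) : Set (ℝ × ℝ) := {z | 1 ≤ c * z.1 + d * z.2}

lemma isLinear (c d : ℝ) : IsLinearMap ℝ (fun z : ℝ × ℝ => c * z.1 + d * z.2) := by
  constructor
  · intro p q; simp only [Prod.fst_add, Prod.snd_add]; ring
  · intro r p; simp only [Prod.smul_fst, Prod.smul_snd, smul_eq_mul]; ring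

lemma convex_Lh (c d : ℝ) : Convex ℝ (Lh c d) := convex_halfSpace_le (isLinear c d) 1

lemma convex_Gh (c d : ℝ) : Convex ℝ (Gh c d) := convex_halfSpace_ge (isLinear c d) 1

lemma cont_lin (c d : ℝ) : Continuous (fun z : ℝ × ℝ => c * z.1 + d * z.2) := by fun_prop

lemma closed_Lh (c d : ℝ) : IsClosed (Lh c d) := isClosed_le (cont_lin c d) continuous_const

lemma closed_Gh (c d : ℝ) : IsClosed (Gh c d) := isClosed_le continuous_const (cont_lin c d)

/-- The central pentagon. -/
def Q : Set (ℝ × ℝ) :=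
  Lh 0 1 ∩ Lh (-1) (1/3) ∩ Lh (-(3/5)) (-(4/5)) ∩ Lh (3/5) (-(4/5)) ∩ Lh 1 (1/3)

/-- The five spikes of the pentagram. -/
def T0 : Set (ℝ × ℝ) := Gh 0 1 ∩ Lh (-1) (1/3) ∩ Lh 1 (1/3)
def T1 : Set (ℝ × ℝ) := Gh (-1) (1/3) ∩ Lh (-(3/5)) (-(4/5)) ∩ Lh 0 1
def T2 : Set (ℝ × ℝ) := Gh (-(3/5)) (-(4/5)) ∩ Lh (3/5) (-(4/5)) ∩ Lh (-1) (1/3)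
def T3 : Set (ℝ × ℝ) := Gh (3/5) (-(4/5)) ∩ Lh 1 (1/3) ∩ Lh (-(3/5)) (-(4/5))
def T4 : Set (ℝ × ℝ) := Gh 1 (1/3) ∩ Lh 0 1 ∩ Lh (3/5) (-(4/5))

/-- The five big triangles (each containing the pentagon and two
non-adjacent spikes). -/
def E0 : Set (ℝ × ℝ) := Lh (-1) (1/3) ∩ Lh (3/5) (-(4/5)) ∩ Lh 1 (1/3)
def E1 : Set (ℝ × ℝ) := Lh (-(3/5)) (-(4/5)) ∩ Lh 1 (1/3) ∩ Lh 0 1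
def E2 : Set (ℝ × ℝ) := Lh (3/5) (-(4/5)) ∩ Lh 0 1 ∩ Lh (-1) (1/3)
def E3 : Set (ℝ × ℝ) := Lh 1 (1/3) ∩ Lh (-1) (1/3) ∩ Lh (-(3/5)) (-(4/5))
def E4 : Set (ℝ × ℝ) := Lh 0 1 ∩ Lh (-(3/5)) (-(4/5)) ∩ Lh (3/5) (-(4/5))

/-- The pentagram. -/
def P : Set (ℝ × ℝ) := Q ∪ T0 ∪ T1 ∪ T2 ∪ T3 ∪ T4

lemma convex_Q : Convex ℝ Q :=
  ((((convex_Lh _ _).inter (convex_Lh _ _)).inter (convex_Lh _ _)).inter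
    (convex_Lh _ _)).inter (convex_Lh _ _)

lemma convex_T0 : Convex ℝ T0 := ((convex_Gh _ _).inter (convex_Lh _ _)).inter (convex_Lh _ _)
lemma convex_T1 : Convex ℝ T1 := ((convex_Gh _ _).inter (convex_Lh _ _)).inter (convex_Lh _ _)
lemma convex_T2 : Convex ℝ T2 := ((convex_Gh _ _).inter (convex_Lh _ _)).inter (convex_Lh _ _)
lemma convex_T3 : Convex ℝ T3 := ((convex_Gh _ _).inter (convex_Lh _ _)).inter (convex_Lh _ _)
lemma convex_T4 : Convex ℝ T4 := ((convex_Gh _ _).inter (convex_Lh _ _)).inter (convex_Lh _ _)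

lemma convex_E0 : Convex ℝ E0 := ((convex_Lh _ _).inter (convex_Lh _ _)).inter (convex_Lh _ _)
lemma convex_E1 : Convex ℝ E1 := ((convex_Lh _ _).inter (convex_Lh _ _)).inter (convex_Lh _ _)
lemma convex_E2 : Convex ℝ E2 := ((convex_Lh _ _).inter (convex_Lh _ _)).inter (convex_Lh _ _)
lemma convex_E3 : Convex ℝ E3 := ((convex_Lh _ _).inter (convex_Lh _ _)).inter (convex_Lh _ _)
lemma convex_E4 : Convex ℝ E4 := ((convex_Lh _ _).inter (convex_Lh _ _)).inter (convex_Lh _ _)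

lemma QsubP : Q ⊆ P := fun _ h => Or.inl (Or.inl (Or.inl (Or.inl (Or.inl h))))
lemma T0subP : T0 ⊆ P := fun _ h => Or.inl (Or.inl (Or.inl (Or.inl (Or.inr h))))
lemma T1subP : T1 ⊆ P := fun _ h => Or.inl (Or.inl (Or.inl (Or.inr h)))
lemma T2subP : T2 ⊆ P := fun _ h => Or.inl (Or.inl (Or.inr h))
lemma T3subP : T3 ⊆ P := fun _ h => Or.inl (Or.inr h)
lemma T4subP : T4 ⊆ P := fun _ h => Or.inr h

lemma classify {z : ℝ × ℝ} (hz : z ∈ P) :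
    z ∈ Q ∨ z ∈ T0 ∨ z ∈ T1 ∨ z ∈ T2 ∨ z ∈ T3 ∨ z ∈ T4 := by
  simp only [P, Set.mem_union] at hz; tauto

-- unfolding simp set
attribute [local simp] Q T0 T1 T2 T3 T4 E0 E1 E2 E3 E4 Lh Gh Set.mem_inter_iff Set.mem_setOf_eq

lemma QsubE0 : Q ⊆ E0 := by
  intro z hz; simp only [Q, E0, Lh, Set.mem_inter_iff, Set.mem_setOf_eq] at hz ⊢; tauto
lemma QsubE1 : Q ⊆ E1 := by
  intro z hz; simp only [Q, E1, Lh, Set.mem_inter_iff, Set.mem_setOf_eq] at hz ⊢; tauto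
lemma QsubE2 : Q ⊆ E2 := by
  intro z hz; simp only [Q, E2, Lh, Set.mem_inter_iff, Set.mem_setOf_eq] at hz ⊢; tauto
lemma QsubE3 : Q ⊆ E3 := by
  intro z hz; simp only [Q, E3, Lh, Set.mem_inter_iff, Set.mem_setOf_eq] at hz ⊢; tauto
lemma QsubE4 : Q ⊆ E4 := by
  intro z hz; simp only [Q, E4, Lh, Set.mem_inter_iff, Set.mem_setOf_eq] at hz ⊢; tauto

lemma T0subE0 : T0 ⊆ E0 := by
  intro z hz
  simp only [T0, E0, Lh, Gh, Set.mem_inter_iff, Set.mem_setOf_eq] at hz ⊢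
  obtain ⟨⟨h1, h2⟩, h3⟩ := hz
  exact ⟨⟨h2, by linarith⟩, h3⟩
lemma T2subE0 : T2 ⊆ E0 := by
  intro z hz
  simp only [T2, E0, Lh, Gh, Set.mem_inter_iff, Set.mem_setOf_eq] at hz ⊢
  obtain ⟨⟨h1, h2⟩, h3⟩ := hz
  exact ⟨⟨h3, h2⟩, by linarith⟩
lemma T1subE1 : T1 ⊆ E1 := by
  intro z hz
  simp only [T1, E1, Lh, Gh, Set.mem_inter_iff, Set.mem_setOf_eq] at hz ⊢
  obtain ⟨⟨h1, h2⟩, h3⟩ := hz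
  exact ⟨⟨h2, by linarith⟩, h3⟩
lemma T3subE1 : T3 ⊆ E1 := by
  intro z hz
  simp only [T3, E1, Lh, Gh, Set.mem_inter_iff, Set.mem_setOf_eq] at hz ⊢
  obtain ⟨⟨h1, h2⟩, h3⟩ := hz
  exact ⟨⟨h3, h2⟩, by linarith⟩
lemma T2subE2 : T2 ⊆ E2 := by
  intro z hz
  simp only [T2, E2, Lh, Gh, Set.mem_inter_iff, Set.mem_setOf_eq] at hz ⊢
  obtain ⟨⟨h1, h2⟩, h3⟩ := hz
  exact ⟨⟨h2, by linarith⟩, h3⟩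
lemma T4subE2 : T4 ⊆ E2 := by
  intro z hz
  simp only [T4, E2, Lh, Gh, Set.mem_inter_iff, Set.mem_setOf_eq] at hz ⊢
  obtain ⟨⟨h1, h2⟩, h3⟩ := hz
  exact ⟨⟨h3, h2⟩, by linarith⟩
lemma T3subE3 : T3 ⊆ E3 := by
  intro z hz
  simp only [T3, E3, Lh, Gh, Set.mem_inter_iff, Set.mem_setOf_eq] at hz ⊢
  obtain ⟨⟨h1, h2⟩, h3⟩ := hz
  exact ⟨⟨h2, by linarith⟩, h3⟩
lemma T0subE3 : T0 ⊆ E3 := by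
  intro z hz
  simp only [T0, E3, Lh, Gh, Set.mem_inter_iff, Set.mem_setOf_eq] at hz ⊢
  obtain ⟨⟨h1, h2⟩, h3⟩ := hz
  exact ⟨⟨h3, h2⟩, by linarith⟩
lemma T4subE4 : T4 ⊆ E4 := by
  intro z hz
  simp only [T4, E4, Lh, Gh, Set.mem_inter_iff, Set.mem_setOf_eq] at hz ⊢
  obtain ⟨⟨h1, h2⟩, h3⟩ := hz
  exact ⟨⟨h2, by linarith⟩, h3⟩
lemma T1subE4 : T1 ⊆ E4 := by
  intro z hz
  simp only [T1, E4, Lh, Gh, Set.mem_inter_iff, Set.mem_setOf_eq] at hz ⊢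
  obtain ⟨⟨h1, h2⟩, h3⟩ := hz
  exact ⟨⟨h3, h2⟩, by linarith⟩

lemma E0subP : E0 ⊆ P := by
  intro z hz
  simp only [E0, Lh, Set.mem_inter_iff, Set.mem_setOf_eq] at hz
  obtain ⟨⟨h1, h2⟩, h3⟩ := hz
  rcases le_or_gt (0 * z.1 + 1 * z.2) 1 with h0 | h0
  · rcases le_or_gt (-(3/5) * z.1 + -(4/5) * z.2) 1 with h4 | h4
    · exact QsubP ⟨⟨⟨⟨h0, h1⟩, h4⟩, h2⟩, h3⟩
    · exact T2subP ⟨⟨le_of_lt h4, h2⟩, h1⟩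
  · exact T0subP ⟨⟨le_of_lt h0, h1⟩, h3⟩
lemma E1subP : E1 ⊆ P := by
  intro z hz
  simp only [E1, Lh, Set.mem_inter_iff, Set.mem_setOf_eq] at hz
  obtain ⟨⟨h1, h2⟩, h3⟩ := hz
  rcases le_or_gt (-1 * z.1 + 1/3 * z.2) 1 with h0 | h0
  · rcases le_or_gt (3/5 * z.1 + -(4/5) * z.2) 1 with h4 | h4
    · exact QsubP ⟨⟨⟨⟨h3, h0⟩, h1⟩, h4⟩, h2⟩
    · exact T3subP ⟨⟨le_of_lt h4, h2⟩, h1⟩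
  · exact T1subP ⟨⟨le_of_lt h0, h1⟩, h3⟩
lemma E2subP : E2 ⊆ P := by
  intro z hz
  simp only [E2, Lh, Set.mem_inter_iff, Set.mem_setOf_eq] at hz
  obtain ⟨⟨h1, h2⟩, h3⟩ := hz
  rcases le_or_gt (-(3/5) * z.1 + -(4/5) * z.2) 1 with h0 | h0
  · rcases le_or_gt (1 * z.1 + 1/3 * z.2) 1 with h4 | h4
    · exact QsubP ⟨⟨⟨⟨h2, h3⟩, h0⟩, h1⟩, h4⟩
    · exact T4subP ⟨⟨le_of_lt h4, h2⟩, h1⟩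
  · exact T2subP ⟨⟨le_of_lt h0, h1⟩, h3⟩
lemma E3subP : E3 ⊆ P := by
  intro z hz
  simp only [E3, Lh, Set.mem_inter_iff, Set.mem_setOf_eq] at hz
  obtain ⟨⟨h1, h2⟩, h3⟩ := hz
  rcases le_or_gt (3/5 * z.1 + -(4/5) * z.2) 1 with h0 | h0
  · rcases le_or_gt (0 * z.1 + 1 * z.2) 1 with h4 | h4
    · exact QsubP ⟨⟨⟨⟨h4, h2⟩, h3⟩, h0⟩, h1⟩
    · exact T0subP ⟨⟨le_of_lt h4, h2⟩, h1⟩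
  · exact T3subP ⟨⟨le_of_lt h0, h1⟩, h3⟩
lemma E4subP : E4 ⊆ P := by
  intro z hz
  simp only [E4, Lh, Set.mem_inter_iff, Set.mem_setOf_eq] at hz
  obtain ⟨⟨h1, h2⟩, h3⟩ := hz
  rcases le_or_gt (1 * z.1 + 1/3 * z.2) 1 with h0 | h0
  · rcases le_or_gt (-1 * z.1 + 1/3 * z.2) 1 with h4 | h4
    · exact QsubP ⟨⟨⟨⟨h1, h4⟩, h2⟩, h3⟩, h0⟩
    · exact T1subP ⟨⟨le_of_lt h4, h2⟩, h1⟩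
  · exact T4subP ⟨⟨le_of_lt h0, h1⟩, h3⟩

/-- A pentagon point sees every point of the pentagram. -/
lemma sQ {u v : ℝ × ℝ} (hu : u ∈ Q) (hv : v ∈ P) : segment ℝ u v ⊆ P := by
  rcases classify hv with h | h | h | h | h | h
  · exact (convex_Q.segment_subset hu h).trans QsubP
  · exact (convex_E0.segment_subset (QsubE0 hu) (T0subE0 h)).trans E0subP
  · exact (convex_E1.segment_subset (QsubE1 hu) (T1subE1 h)).trans E1subP
  · exact (convex_E2.segment_subset (QsubE2 hu) (T2subE2 h)).trans E2subP
  · exact (convex_E3.segment_subset (QsubE3 hu) (T3subE3 h)).trans E3subP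
  · exact (convex_E4.segment_subset (QsubE4 hu) (T4subE4 h)).trans E4subP

lemma sT0 {u v : ℝ × ℝ} (hu : u ∈ T0) (hv : v ∈ T0) : segment ℝ u v ⊆ P :=
  (convex_T0.segment_subset hu hv).trans T0subP
lemma sT1 {u v : ℝ × ℝ} (hu : u ∈ T1) (hv : v ∈ T1) : segment ℝ u v ⊆ P :=
  (convex_T1.segment_subset hu hv).trans T1subP
lemma sT2 {u v : ℝ × ℝ} (hu : u ∈ T2) (hv : v ∈ T2) : segment ℝ u v ⊆ P :=
  (convex_T2.segment_subset hu hv).trans T2subP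
lemma sT3 {u v : ℝ × ℝ} (hu : u ∈ T3) (hv : v ∈ T3) : segment ℝ u v ⊆ P :=
  (convex_T3.segment_subset hu hv).trans T3subP
lemma sT4 {u v : ℝ × ℝ} (hu : u ∈ T4) (hv : v ∈ T4) : segment ℝ u v ⊆ P :=
  (convex_T4.segment_subset hu hv).trans T4subP

lemma s02 {u v : ℝ × ℝ} (hu : u ∈ T0) (hv : v ∈ T2) : segment ℝ u v ⊆ P :=
  (convex_E0.segment_subset (T0subE0 hu) (T2subE0 hv)).trans E0subP
lemma s13 {u v : ℝ × ℝ} (hu : u ∈ T1) (hv : v ∈ T3) : segment ℝ u v ⊆ P :=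
  (convex_E1.segment_subset (T1subE1 hu) (T3subE1 hv)).trans E1subP
lemma s24 {u v : ℝ × ℝ} (hu : u ∈ T2) (hv : v ∈ T4) : segment ℝ u v ⊆ P :=
  (convex_E2.segment_subset (T2subE2 hu) (T4subE2 hv)).trans E2subP
lemma s30 {u v : ℝ × ℝ} (hu : u ∈ T3) (hv : v ∈ T0) : segment ℝ u v ⊆ P :=
  (convex_E3.segment_subset (T3subE3 hu) (T0subE3 hv)).trans E3subP
lemma s41 {u v : ℝ × ℝ} (hu : u ∈ T4) (hv : v ∈ T1) : segment ℝ u v ⊆ P :=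
  (convex_E4.segment_subset (T4subE4 hu) (T1subE4 hv)).trans E4subP

lemma zero_mem_Q : ((0 : ℝ), (0 : ℝ)) ∈ Q := by
  simp only [Q, Lh, Set.mem_inter_iff, Set.mem_setOf_eq]; norm_num

set_option maxHeartbeats 4000000 in
/-- Every finite hidden set has at most two points. -/
lemma hidden_le_two (Hs : Set (ℝ × ℝ)) (hH : IsHiddenSet P Hs) (hfin : Hs.Finite) :
    Hs.ncard ≤ 2 := by
  by_contra hc
  push_neg at hc
  obtain ⟨t, htsub, htcard⟩ := Set.exists_subset_card_eq (show 3 ≤ Hs.ncard by omega)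
  obtain ⟨a, b, c, hab, hac, hbc, rfl⟩ := Set.ncard_eq_three.mp htcard
  obtain ⟨hHP, hvis⟩ := hH
  have haH : a ∈ Hs := htsub (by simp)
  have hbH : b ∈ Hs := htsub (by simp)
  have hcH : c ∈ Hs := htsub (by simp)
  have hA := classify (hHP haH)
  have hB := classify (hHP hbH)
  have hC := classify (hHP hcH)
  rcases hA with hA | hA | hA | hA | hA | hA <;>
    rcases hB with hB | hB | hB | hB | hB | hB <;>
      rcases hC with hC | hC | hC | hC | hC | hC <;>
        first
          | exact hvis a haH b hbH hab (sQ hA (hHP hbH))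
          | exact hvis b hbH a haH (Ne.symm hab) (sQ hB (hHP haH))
          | exact hvis c hcH a haH (Ne.symm hac) (sQ hC (hHP haH))
          | exact hvis a haH b hbH hab (sT0 hA hB)
          | exact hvis a haH b hbH hab (sT1 hA hB)
          | exact hvis a haH b hbH hab (sT2 hA hB)
          | exact hvis a haH b hbH hab (sT3 hA hB)
          | exact hvis a haH b hbH hab (sT4 hA hB)
          | exact hvis a haH c hcH hac (sT0 hA hC)
          | exact hvis a haH c hcH hac (sT1 hA hC)
          | exact hvis a haH c hcH hac (sT2 hA hC)
          | exact hvis a haH c hcH hac (sT3 hA hC)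
          | exact hvis a haH c hcH hac (sT4 hA hC)
          | exact hvis b hbH c hcH hbc (sT0 hB hC)
          | exact hvis b hbH c hcH hbc (sT1 hB hC)
          | exact hvis b hbH c hcH hbc (sT2 hB hC)
          | exact hvis b hbH c hcH hbc (sT3 hB hC)
          | exact hvis b hbH c hcH hbc (sT4 hB hC)
          | exact hvis a haH b hbH hab (s02 hA hB)
          | exact hvis b hbH a haH (Ne.symm hab) (s02 hB hA)
          | exact hvis a haH b hbH hab (s13 hA hB)
          | exact hvis b hbH a haH (Ne.symm hab) (s13 hB hA)
          | exact hvis a haH b hbH hab (s24 hA hB)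
          | exact hvis b hbH a haH (Ne.symm hab) (s24 hB hA)
          | exact hvis a haH b hbH hab (s30 hA hB)
          | exact hvis b hbH a haH (Ne.symm hab) (s30 hB hA)
          | exact hvis a haH b hbH hab (s41 hA hB)
          | exact hvis b hbH a haH (Ne.symm hab) (s41 hB hA)
          | exact hvis a haH c hcH hac (s02 hA hC)
          | exact hvis c hcH a haH (Ne.symm hac) (s02 hC hA)
          | exact hvis a haH c hcH hac (s13 hA hC)
          | exact hvis c hcH a haH (Ne.symm hac) (s13 hC hA)
          | exact hvis a haH c hcH hac (s24 hA hC)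
          | exact hvis c hcH a haH (Ne.symm hac) (s24 hC hA)
          | exact hvis a haH c hcH hac (s30 hA hC)
          | exact hvis c hcH a haH (Ne.symm hac) (s30 hC hA)
          | exact hvis a haH c hcH hac (s41 hA hC)
          | exact hvis c hcH a haH (Ne.symm hac) (s41 hC hA)
          | exact hvis b hbH c hcH hbc (s02 hB hC)
          | exact hvis c hcH b hbH (Ne.symm hbc) (s02 hC hB)
          | exact hvis b hbH c hcH hbc (s13 hB hC)
          | exact hvis c hcH b hbH (Ne.symm hbc) (s13 hC hB)
          | exact hvis b hbH c hcH hbc (s24 hB hC)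
          | exact hvis c hcH b hbH (Ne.symm hbc) (s24 hC hB)
          | exact hvis b hbH c hcH hbc (s30 hB hC)
          | exact hvis c hcH b hbH (Ne.symm hbc) (s30 hC hB)
          | exact hvis b hbH c hcH hbc (s41 hB hC)
          | exact hvis c hcH b hbH (Ne.symm hbc) (s41 hC hB)

/-- The pentagram is bounded. -/
lemma P_subset_Icc : P ⊆ Set.Icc ((-3, -3) : ℝ × ℝ) ((3, 3) : ℝ × ℝ) := by
  intro z hz
  have h := classify hz
  simp only [Q, T0, T1, T2, T3, T4, Lh, Gh, Set.mem_inter_iff, Set.mem_setOf_eq] at h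
  simp only [Set.mem_Icc, Prod.le_def]
  rcases h with ⟨⟨⟨⟨h1, h2⟩, h3⟩, h4⟩, h5⟩ | ⟨⟨h1, h2⟩, h3⟩ | ⟨⟨h1, h2⟩, h3⟩ |
    ⟨⟨h1, h2⟩, h3⟩ | ⟨⟨h1, h2⟩, h3⟩ | ⟨⟨h1, h2⟩, h3⟩ <;>
    refine ⟨⟨by linarith, by linarith⟩, by linarith, by linarith⟩

lemma closed_P : IsClosed P :=
  (((((((((closed_Lh _ _).inter (closed_Lh _ _)).inter (closed_Lh _ _)).inter
    (closed_Lh _ _)).inter (closed_Lh _ _)).union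
    (((closed_Gh _ _).inter (closed_Lh _ _)).inter (closed_Lh _ _))).union
    (((closed_Gh _ _).inter (closed_Lh _ _)).inter (closed_Lh _ _))).union
    (((closed_Gh _ _).inter (closed_Lh _ _)).inter (closed_Lh _ _))).union
    (((closed_Gh _ _).inter (closed_Lh _ _)).inter (closed_Lh _ _))).union
    (((closed_Gh _ _).inter (closed_Lh _ _)).inter (closed_Lh _ _))

lemma compact_P : IsCompact P :=
  IsCompact.of_isClosed_subset isCompact_Icc closed_P P_subset_Icc

-- The five spike tips.
lemma t0_mem : ((0 : ℝ), (3 : ℝ)) ∈ P := by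
  apply T0subP
  simp only [T0, Lh, Gh, Set.mem_inter_iff, Set.mem_setOf_eq]; norm_num
lemma t1_mem : ((-3 : ℝ), (1 : ℝ)) ∈ P := by
  apply T1subP
  simp only [T1, Lh, Gh, Set.mem_inter_iff, Set.mem_setOf_eq]; norm_num
lemma t2_mem : ((-17/9 : ℝ), (-8/3 : ℝ)) ∈ P := by
  apply T2subP
  simp only [T2, Lh, Gh, Set.mem_inter_iff, Set.mem_setOf_eq]; norm_num
lemma t3_mem : ((17/9 : ℝ), (-8/3 : ℝ)) ∈ P := by
  apply T3subP
  simp only [T3, Lh, Gh, Set.mem_inter_iff, Set.mem_setOf_eq]; norm_num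
lemma t4_mem : ((3 : ℝ), (1 : ℝ)) ∈ P := by
  apply T4subP
  simp only [T4, Lh, Gh, Set.mem_inter_iff, Set.mem_setOf_eq]; norm_num

-- Midpoints of adjacent spike tips are not in the pentagram.
lemma m0_not : ((-3/2 : ℝ), (2 : ℝ)) ∉ P := by
  intro h
  rcases classify h with h | h | h | h | h | h <;>
    (simp only [Q, T0, T1, T2, T3, T4, Lh, Gh, Set.mem_inter_iff, Set.mem_setOf_eq] at h;
     norm_num at h)
lemma m1_not : ((-22/9 : ℝ), (-5/6 : ℝ)) ∉ P := by
  intro h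
  rcases classify h with h | h | h | h | h | h <;>
    (simp only [Q, T0, T1, T2, T3, T4, Lh, Gh, Set.mem_inter_iff, Set.mem_setOf_eq] at h;
     norm_num at h)
lemma m2_not : ((0 : ℝ), (-8/3 : ℝ)) ∉ P := by
  intro h
  rcases classify h with h | h | h | h | h | h <;>
    (simp only [Q, T0, T1, T2, T3, T4, Lh, Gh, Set.mem_inter_iff, Set.mem_setOf_eq] at h;
     norm_num at h)
lemma m3_not : ((22/9 : ℝ), (-5/6 : ℝ)) ∉ P := by
  intro h
  rcases classify h with h | h | h | h | h | h <;>
    (simp only [Q, T0, T1, T2, T3, T4, Lh, Gh, Set.mem_inter_iff, Set.mem_setOf_eq] at h;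
     norm_num at h)
lemma m4_not : ((3/2 : ℝ), (2 : ℝ)) ∉ P := by
  intro h
  rcases classify h with h | h | h | h | h | h <;>
    (simp only [Q, T0, T1, T2, T3, T4, Lh, Gh, Set.mem_inter_iff, Set.mem_setOf_eq] at h;
     norm_num at h)

lemma half_seg {p q m : ℝ × ℝ} (h : (1/2 : ℝ) • p + (1/2 : ℝ) • q = m) :
    m ∈ segment ℝ p q :=
  ⟨1/2, 1/2, by norm_num, by norm_num, by norm_num, h⟩

-- No convex subset of `P` contains two adjacent spike tips.
lemma badj0 (s : Set (ℝ × ℝ)) (hc : Convex ℝ s) (hs : s ⊆ P)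
    (h1 : ((0 : ℝ), (3 : ℝ)) ∈ s) (h2 : ((-3 : ℝ), (1 : ℝ)) ∈ s) : False :=
  m0_not (hs (hc.segment_subset h1 h2 (half_seg (by norm_num [Prod.ext_iff]))))
lemma badj1 (s : Set (ℝ × ℝ)) (hc : Convex ℝ s) (hs : s ⊆ P)
    (h1 : ((-3 : ℝ), (1 : ℝ)) ∈ s) (h2 : ((-17/9 : ℝ), (-8/3 : ℝ)) ∈ s) : False :=
  m1_not (hs (hc.segment_subset h1 h2 (half_seg (by norm_num [Prod.ext_iff]))))
lemma badj2 (s : Set (ℝ × ℝ)) (hc : Convex ℝ s) (hs : s ⊆ P)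
    (h1 : ((-17/9 : ℝ), (-8/3 : ℝ)) ∈ s) (h2 : ((17/9 : ℝ), (-8/3 : ℝ)) ∈ s) : False :=
  m2_not (hs (hc.segment_subset h1 h2 (half_seg (by norm_num [Prod.ext_iff]))))
lemma badj3 (s : Set (ℝ × ℝ)) (hc : Convex ℝ s) (hs : s ⊆ P)
    (h1 : ((17/9 : ℝ), (-8/3 : ℝ)) ∈ s) (h2 : ((3 : ℝ), (1 : ℝ)) ∈ s) : False :=
  m3_not (hs (hc.segment_subset h1 h2 (half_seg (by norm_num [Prod.ext_iff]))))
lemma badj4 (s : Set (ℝ × ℝ)) (hc : Convex ℝ s) (hs : s ⊆ P)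
    (h1 : ((3 : ℝ), (1 : ℝ)) ∈ s) (h2 : ((0 : ℝ), (3 : ℝ)) ∈ s) : False :=
  m4_not (hs (hc.segment_subset h1 h2 (half_seg (by norm_num [Prod.ext_iff]))))

end Pentagram

/-- There is a compact star-shaped set whose finite hidden sets all have at
most 2 points, which is coverable by 3 convex pieces but not by 2; hence it is
not a homestead polygon. -/
theorem exists_starShaped_nonhomestead :
    ∃ (P : Set (ℝ × ℝ)) (x : ℝ × ℝ), IsCompact P ∧ x ∈ P ∧
      (∀ p ∈ P, segment ℝ x p ⊆ P) ∧
      (∀ H : Set (ℝ × ℝ), IsHiddenSet P H → H.Finite → H.ncard ≤ 2) ∧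
      (∃ C : Fin 3 → Set (ℝ × ℝ),
        (∀ i, Convex ℝ (C i)) ∧ (∀ i, C i ⊆ P) ∧ (⋃ i, C i) = P) ∧
      ¬ (∃ C : Fin 2 → Set (ℝ × ℝ),
        (∀ i, Convex ℝ (C i)) ∧ (∀ i, C i ⊆ P) ∧ (⋃ i, C i) = P) := by
  classical
  refine ⟨Pentagram.P, ((0 : ℝ), (0 : ℝ)), Pentagram.compact_P,
    Pentagram.QsubP Pentagram.zero_mem_Q,
    fun p hp => Pentagram.sQ Pentagram.zero_mem_Q hp,
    fun Hs hH hfin => Pentagram.hidden_le_two Hs hH hfin, ?_, ?_⟩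
  · refine ⟨![Pentagram.E0, Pentagram.E1, Pentagram.E4], ?_, ?_, ?_⟩
    · intro i
      fin_cases i
      · exact Pentagram.convex_E0
      · exact Pentagram.convex_E1
      · exact Pentagram.convex_E4
    · intro i
      fin_cases i
      · exact Pentagram.E0subP
      · exact Pentagram.E1subP
      · exact Pentagram.E4subP
    · apply Set.Subset.antisymm
      · apply Set.iUnion_subset
        intro i
        fin_cases i
        · exact Pentagram.E0subP
        · exact Pentagram.E1subP
        · exact Pentagram.E4subP
      · intro z hz
        rcases Pentagram.classify hz with h | h | h | h | h | h
        · exact Set.mem_iUnion.mpr ⟨0, Pentagram.QsubE0 h⟩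
        · exact Set.mem_iUnion.mpr ⟨0, Pentagram.T0subE0 h⟩
        · exact Set.mem_iUnion.mpr ⟨1, Pentagram.T1subE1 h⟩
        · exact Set.mem_iUnion.mpr ⟨0, Pentagram.T2subE0 h⟩
        · exact Set.mem_iUnion.mpr ⟨1, Pentagram.T3subE1 h⟩
        · exact Set.mem_iUnion.mpr ⟨2, Pentagram.T4subE4 h⟩
  · rintro ⟨C, hconv, hsub, hcov⟩
    have memtwo : ∀ z ∈ Pentagram.P, z ∈ C 0 ∨ z ∈ C 1 := by
      intro z hz
      rw [← hcov] at hz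
      rcases Set.mem_iUnion.mp hz with ⟨i, hi⟩
      fin_cases i
      · exact Or.inl hi
      · exact Or.inr hi
    have h0 := memtwo _ Pentagram.t0_mem
    have h1 := memtwo _ Pentagram.t1_mem
    have h2 := memtwo _ Pentagram.t2_mem
    have h3 := memtwo _ Pentagram.t3_mem
    have h4 := memtwo _ Pentagram.t4_mem
    rcases h0 with h0 | h0 <;> rcases h1 with h1 | h1 <;> rcases h2 with h2 | h2 <;>
      rcases h3 with h3 | h3 <;> rcases h4 with h4 | h4 <;>
        first
          | exact Pentagram.badj0 (C 0) (hconv 0) (hsub 0) h0 h1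
          | exact Pentagram.badj0 (C 1) (hconv 1) (hsub 1) h0 h1
          | exact Pentagram.badj1 (C 0) (hconv 0) (hsub 0) h1 h2
          | exact Pentagram.badj1 (C 1) (hconv 1) (hsub 1) h1 h2
          | exact Pentagram.badj2 (C 0) (hconv 0) (hsub 0) h2 h3
          | exact Pentagram.badj2 (C 1) (hconv 1) (hsub 1) h2 h3
          | exact Pentagram.badj3 (C 0) (hconv 0) (hsub 0) h3 h4
          | exact Pentagram.badj3 (C 1) (hconv 1) (hsub 1) h3 h4
          | exact Pentagram.badj4 (C 0) (hconv 0) (hsub 0) h4 h0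
          | exact Pentagram.badj4 (C 1) (hconv 1) (hsub 1) h4 h0
end

section
/- Let P ⊆ ℝ² be a closed set that equals the closure of its interior, and let H ⊆ P be a finite hidden set in P. Then there exists a hidden set H' ⊆ P with |H'| = |H| such that every point of H' has both coordinates rational. In particular, there always exist maximum hidden sets all of whose points have rational coordinates. -/
/-- Openness of the "do not see each other" condition for closed `P`. -/
lemma not_seg_subset_open {P : Set (ℝ × ℝ)} (hP : IsClosed P) {p q : ℝ × ℝ}
    (h : ¬ segment ℝ p q ⊆ P) :
    ∃ ε > 0, ∀ p' q' : ℝ × ℝ, dist p' p < ε → dist q' q < ε →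
      ¬ segment ℝ p' q' ⊆ P := by
  rw [Set.not_subset] at h
  obtain ⟨x, hx, hxP⟩ := h
  obtain ⟨a, b, ha, hb, hab, hx⟩ := hx
  obtain ⟨δ, hδ, hball⟩ := Metric.isOpen_iff.1 hP.isOpen_compl x hxP
  refine ⟨δ, hδ, fun p' q' hp' hq' hsub => ?_⟩
  have hx' : a • p' + b • q' ∈ segment ℝ p' q' := ⟨a, b, ha, hb, hab, rfl⟩
  have hdist : dist (a • p' + b • q') x < δ := by
    rw [← hx]
    calc dist (a • p' + b • q') (a • p + b • q)
        ≤ dist (a • p') (a • p) + dist (b • q') (b • q) := dist_add_add_le _ _ _ _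
      _ = a * dist p' p + b * dist q' q := by
          rw [dist_smul₀, dist_smul₀, Real.norm_of_nonneg ha, Real.norm_of_nonneg hb]
      _ < a * δ + b * δ := by
          rcases eq_or_lt_of_le ha with h0 | h0
          · rcases eq_or_lt_of_le hb with h0' | h0'
            · exfalso; rw [← h0, ← h0'] at hab; norm_num at hab
            · rw [← h0]; simpa using (mul_lt_mul_of_pos_left hq' h0')
          · rcases eq_or_lt_of_le hb with h0' | h0'
            · rw [← h0']; simpa using (mul_lt_mul_of_pos_left hp' h0)
            · exact add_lt_add (mul_lt_mul_of_pos_left hp' h0)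
                (mul_lt_mul_of_pos_left hq' h0')
      _ = δ := by rw [← add_mul, hab, one_mul]
  exact (hball hdist) (hsub hx')

/-- Rational approximation inside a regular closed set. -/
lemma rat_point_near {P : Set (ℝ × ℝ)} (hreg : P = closure (interior P))
    (p : ℝ × ℝ) (ε : ℝ) (hε : 0 < ε) (hp : p ∈ P) :
    ∃ r : ℝ × ℝ, r ∈ P ∧ dist r p < ε ∧ ∃ q₁ q₂ : ℚ, r = ((q₁ : ℝ), (q₂ : ℝ)) := by
  have hp' : p ∈ closure (interior P) := hreg ▸ hp
  obtain ⟨y, hy, hyp⟩ := Metric.mem_closure_iff.1 hp' (ε / 2) (by linarith)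
  obtain ⟨δ, hδ, hball⟩ := Metric.isOpen_iff.1 isOpen_interior y hy
  set δ' := min δ (ε / 2) with hδ'def
  have hδ' : 0 < δ' := lt_min hδ (by linarith)
  obtain ⟨q₁, hq₁⟩ := exists_rat_near y.1 hδ'
  obtain ⟨q₂, hq₂⟩ := exists_rat_near y.2 hδ'
  refine ⟨((q₁ : ℝ), (q₂ : ℝ)), ?_, ?_, q₁, q₂, rfl⟩
  · have hdy : dist ((q₁ : ℝ), (q₂ : ℝ)) y < δ := by
      rw [Prod.dist_eq]
      have h1 : dist (q₁ : ℝ) y.1 < δ' := by rw [Real.dist_eq, abs_sub_comm]; exact hq₁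
      have h2 : dist (q₂ : ℝ) y.2 < δ' := by rw [Real.dist_eq, abs_sub_comm]; exact hq₂
      exact max_lt (lt_of_lt_of_le h1 (min_le_left _ _)) (lt_of_lt_of_le h2 (min_le_left _ _))
    exact interior_subset (hball hdy)
  · have hdy : dist ((q₁ : ℝ), (q₂ : ℝ)) y < ε / 2 := by
      rw [Prod.dist_eq]
      have h1 : dist (q₁ : ℝ) y.1 < δ' := by rw [Real.dist_eq, abs_sub_comm]; exact hq₁
      have h2 : dist (q₂ : ℝ) y.2 < δ' := by rw [Real.dist_eq, abs_sub_comm]; exact hq₂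
      exact max_lt (lt_of_lt_of_le h1 (min_le_right _ _)) (lt_of_lt_of_le h2 (min_le_right _ _))
    calc dist ((q₁ : ℝ), (q₂ : ℝ)) p ≤ dist ((q₁ : ℝ), (q₂ : ℝ)) y + dist y p := dist_triangle _ _ _
      _ < ε / 2 + ε / 2 := add_lt_add hdy (by rwa [dist_comm])
      _ = ε := by ring

/-- If `P ⊆ ℝ²` is closed and equals the closure of its interior, then every
finite hidden set in `P` can be replaced by a hidden set of the same size all
of whose points have rational coordinates. -/
theorem exists_rational_hiddenSet_of_same_card
    (P : Set (ℝ × ℝ)) (hP : IsClosed P) (hreg : P = closure (interior P))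
    (H : Set (ℝ × ℝ)) (hH : IsHiddenSet P H) (hfin : H.Finite) :
    ∃ H' : Set (ℝ × ℝ), IsHiddenSet P H' ∧ H'.ncard = H.ncard ∧
      ∀ p ∈ H', ∃ q₁ q₂ : ℚ, p = ((q₁ : ℝ), (q₂ : ℝ)) := by
  classical
  have hsep : ∀ p q : ℝ × ℝ, ∃ ε : ℝ, 0 < ε ∧
      ((p ∈ H ∧ q ∈ H ∧ p ≠ q) → ∀ p' q' : ℝ × ℝ,
        dist p' p < ε → dist q' q < ε → ¬ segment ℝ p' q' ⊆ P) := by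
    intro p q
    by_cases h : p ∈ H ∧ q ∈ H ∧ p ≠ q
    · obtain ⟨ε, hε, hεs⟩ := not_seg_subset_open hP (hH.2 p h.1 q h.2.1 h.2.2)
      exact ⟨ε, hε, fun _ => hεs⟩
    · exact ⟨1, one_pos, fun h' => absurd h' h⟩
  choose E hEpos hEspec using hsep
  set F : Finset (ℝ × ℝ) := hfin.toFinset with hF
  set G : Finset ((ℝ × ℝ) × (ℝ × ℝ)) := (F ×ˢ F).filter (fun pq => pq.1 ≠ pq.2) with hG
  set T : Finset ℝ := insert 1 (G.image (fun pq => min (E pq.1 pq.2) (dist pq.1 pq.2 / 2)))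
    with hT
  have hTne : T.Nonempty := ⟨1, Finset.mem_insert_self _ _⟩
  set ε₀ : ℝ := T.min' hTne with hε₀def
  have hε₀pos : 0 < ε₀ := by
    have hmem := T.min'_mem hTne
    rw [← hε₀def, hT] at hmem
    rcases Finset.mem_insert.1 hmem with h | h
    · rw [h]; norm_num
    · obtain ⟨pq, hpq, hval⟩ := Finset.mem_image.1 h
      rw [hG, Finset.mem_filter] at hpq
      rw [← hval]
      exact lt_min (hEpos _ _) (half_pos (dist_pos.2 hpq.2))
  -- key bound for pairs
  have hkey : ∀ p ∈ H, ∀ q ∈ H, p ≠ q →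
      ε₀ ≤ E p q ∧ ε₀ ≤ dist p q / 2 := by
    intro p hp q hq hne
    have hmemG : (p, q) ∈ G := by
      rw [hG, Finset.mem_filter, Finset.mem_product]
      exact ⟨⟨hfin.mem_toFinset.2 hp, hfin.mem_toFinset.2 hq⟩, hne⟩
    have hmemT : min (E p q) (dist p q / 2) ∈ T := by
      rw [hT]
      exact Finset.mem_insert_of_mem (Finset.mem_image.2 ⟨(p, q), hmemG, rfl⟩)
    have := T.min'_le _ hmemT
    rw [← hε₀def] at this
    exact ⟨this.trans (min_le_left _ _), this.trans (min_le_right _ _)⟩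
  -- choose rational approximations
  have happrox : ∀ p : ℝ × ℝ, ∃ r : ℝ × ℝ, p ∈ P →
      r ∈ P ∧ dist r p < ε₀ ∧ ∃ q₁ q₂ : ℚ, r = ((q₁ : ℝ), (q₂ : ℝ)) := by
    intro p
    by_cases hp : p ∈ P
    · obtain ⟨r, hr⟩ := rat_point_near hreg p ε₀ hε₀pos hp
      exact ⟨r, fun _ => hr⟩
    · exact ⟨p, fun h => absurd h hp⟩
  choose f hf using happrox
  have hfP : ∀ p ∈ H, f p ∈ P := fun p hp => (hf p (hH.1 hp)).1
  have hfd : ∀ p ∈ H, dist (f p) p < ε₀ := fun p hp => (hf p (hH.1 hp)).2.1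
  have hfq : ∀ p ∈ H, ∃ q₁ q₂ : ℚ, f p = ((q₁ : ℝ), (q₂ : ℝ)) :=
    fun p hp => (hf p (hH.1 hp)).2.2
  have hinj : Set.InjOn f H := by
    intro p hp q hq hfe
    by_contra hne
    have h1 := hfd p hp
    have h2 := hfd q hq
    have hb := (hkey p hp q hq hne).2
    have : dist p q ≤ dist p (f p) + dist (f q) q := by
      calc dist p q ≤ dist p (f p) + dist (f p) q := dist_triangle _ _ _
        _ = dist p (f p) + dist (f q) q := by rw [hfe]
    rw [dist_comm p (f p)] at this
    linarith
  refine ⟨f '' H, ⟨?_, ?_⟩, ?_, ?_⟩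
  · rintro _ ⟨p, hp, rfl⟩; exact hfP p hp
  · rintro _ ⟨p, hp, rfl⟩ _ ⟨q, hq, rfl⟩ hne
    have hpq : p ≠ q := fun h => hne (by rw [h])
    have hb := (hkey p hp q hq hpq).1
    exact hEspec p q ⟨hp, hq, hpq⟩ (f p) (f q) (lt_of_lt_of_le (hfd p hp) hb)
      (lt_of_lt_of_le (hfd q hq) hb)
  · exact Set.ncard_image_of_injOn hinj
  · rintro _ ⟨p, hp, rfl⟩; exact hfq p hp
end
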